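/- arXiv:2512.14557 — 4 statements merged into one kernel-verified Lean document; each statement's English description precedes it below -/
import Mathlib

section
/- Consider regularized logistic regression with loss J(w, D) = (1/n) Σ_{i=1}^n log(1 + exp(-X_iᵀ w t_i)) + (λ/2)‖w‖₂², where each covariate vector satisfies X_i ∈ [0,1]^d and each label t_i ∈ {-1, 1}. If D and D' are two datasets of size n differing in a single sample, then the difference g(w) = J(w, D) - J(w, D') has gradient bounded by ‖∇g(w)‖_∞ ≤ 2/n for all w ∈ ℝ^d. -/
/-!
The regulariser and every sample other than `i₀` cancel in `g`, so
`g = (1/n) (ℓ(X i₀, t i₀) - ℓ(X' i₀, t' i₀))` with `ℓ(x, s)(w) = log(1 + exp(-xᵀw s))`.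
By the chain rule `∂ⱼ ℓ(x, s)(w) = -σ(-xᵀw s) xⱼ s` with the sigmoid `σ` taking values in `(0, 1)`,
so `|∂ⱼ ℓ| ≤ |xⱼ| |s| ≤ 1` and `|∂ⱼ g| ≤ 2/n`.
-/

open Finset

/-- Regularized logistic-regression loss
`J(w, D) = (1/n) Σᵢ log(1 + exp(-Xᵢᵀ w tᵢ)) + (λ/2)‖w‖₂²`. -/
noncomputable def logRegLoss {n d : ℕ} (lam : ℝ) (X : Fin n → Fin d → ℝ)
    (t : Fin n → ℝ) (w : Fin d → ℝ) : ℝ :=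
  (1 / n) * ∑ i, Real.log (1 + Real.exp (-(∑ j, X i j * w j) * t i)) +
    lam / 2 * ∑ j, (w j) ^ 2

open Real

theorem Fintype.sum_sub_sum_eq_of_eq_of_ne {ι M : Type*} [Fintype ι] [AddCommGroup M]
    {f g : ι → M} (i₀ : ι) (h : ∀ i, i ≠ i₀ → f i = g i) :
    ∑ i, f i - ∑ i, g i = f i₀ - g i₀ := by
  rw [← Finset.sum_sub_distrib]
  exact Fintype.sum_eq_single i₀ fun i hi => sub_eq_zero.mpr (h i hi)

theorem hasDerivAt_log_one_add_exp (u : ℝ) :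
    HasDerivAt (fun u => log (1 + exp u)) (sigmoid u) u := by
  convert ((hasDerivAt_exp u).const_add 1).log (by positivity) using 1
  rw [sigmoid_def, exp_neg]
  field_simp
  ring

theorem HasFDerivAt.log_one_add_exp {E : Type*} [NormedAddCommGroup E] [NormedSpace ℝ E]
    {f : E → ℝ} {f' : E →L[ℝ] ℝ} {w : E} (hf : HasFDerivAt f f' w) :
    HasFDerivAt (fun w => Real.log (1 + Real.exp (f w))) (sigmoid (f w) • f') w :=
  (hasDerivAt_log_one_add_exp (f w)).comp_hasFDerivAt w hf

section LogisticLoss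

variable {d : ℕ}

noncomputable def logisticLoss (x : Fin d → ℝ) (s : ℝ) (w : Fin d → ℝ) : ℝ :=
  log (1 + exp (-(∑ j, x j * w j) * s))

theorem hasFDerivAt_neg_dotProduct_mul (x : Fin d → ℝ) (s : ℝ) (w : Fin d → ℝ) :
    HasFDerivAt (fun w : Fin d → ℝ => -(∑ j, x j * w j) * s)
      (s • -∑ j, x j • ContinuousLinearMap.proj (R := ℝ) (φ := fun _ : Fin d => ℝ) j) w :=
  (HasFDerivAt.fun_sum fun j _ => (hasFDerivAt_apply j w).const_mul (x j)).neg.mul_const s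

theorem hasFDerivAt_logisticLoss (x : Fin d → ℝ) (s : ℝ) (w : Fin d → ℝ) :
    HasFDerivAt (logisticLoss x s)
      (sigmoid (-(∑ j, x j * w j) * s) •
        s • -∑ j, x j • ContinuousLinearMap.proj (R := ℝ) (φ := fun _ : Fin d => ℝ) j) w :=
  (hasFDerivAt_neg_dotProduct_mul x s w).log_one_add_exp

theorem fderiv_logisticLoss_apply_single (x : Fin d → ℝ) (s : ℝ) (w : Fin d → ℝ) (k : Fin d) :
    fderiv ℝ (logisticLoss x s) w (Pi.single k 1) =
      -(sigmoid (-(∑ j, x j * w j) * s) * (x k * s)) := by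
  rw [(hasFDerivAt_logisticLoss x s w).fderiv]
  simp only [smul_apply, neg_apply, _root_.sum_apply, ContinuousLinearMap.proj_apply,
    Pi.single_apply, smul_eq_mul, mul_ite, mul_one, mul_zero, sum_ite_eq', mem_univ, if_true]
  ring

theorem abs_fderiv_logisticLoss_apply_single_le (x : Fin d → ℝ) (s : ℝ) (w : Fin d → ℝ)
    (k : Fin d) : |fderiv ℝ (logisticLoss x s) w (Pi.single k 1)| ≤ |x k| * |s| := by
  rw [fderiv_logisticLoss_apply_single, abs_neg, abs_mul, abs_mul,
    abs_of_pos (sigmoid_pos _)]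
  exact mul_le_of_le_one_left (by positivity) (sigmoid_le_one _)

theorem differentiableAt_logisticLoss (x : Fin d → ℝ) (s : ℝ) (w : Fin d → ℝ) :
    DifferentiableAt ℝ (logisticLoss x s) w :=
  (hasFDerivAt_logisticLoss x s w).differentiableAt

end LogisticLoss

theorem logRegLoss_sub_logRegLoss {n d : ℕ} (lam : ℝ) {X X' : Fin n → Fin d → ℝ}
    {t t' : Fin n → ℝ} (i₀ : Fin n) (hdiff : ∀ i, i ≠ i₀ → X i = X' i ∧ t i = t' i) :
    (fun w => logRegLoss lam X t w - logRegLoss lam X' t' w) =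
      fun w => (1 / n : ℝ) * (logisticLoss (X i₀) (t i₀) - logisticLoss (X' i₀) (t' i₀)) w := by
  ext w
  have hsum := Fintype.sum_sub_sum_eq_of_eq_of_ne (f := fun i => logisticLoss (X i) (t i) w)
    (g := fun i => logisticLoss (X' i) (t' i) w) i₀
    fun i hi => by rw [(hdiff i hi).1, (hdiff i hi).2]
  simp only [logRegLoss, logisticLoss, Pi.sub_apply] at hsum ⊢
  linear_combination (1 / n : ℝ) * hsum

theorem stmt6_general {n d : ℕ} (lam : ℝ)
    (X X' : Fin n → Fin d → ℝ) (t t' : Fin n → ℝ)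
    (hX : ∀ i j, X i j ∈ Set.Icc (0 : ℝ) 1) (hX' : ∀ i j, X' i j ∈ Set.Icc (0 : ℝ) 1)
    (ht : ∀ i, t i = 1 ∨ t i = -1) (ht' : ∀ i, t' i = 1 ∨ t' i = -1)
    (i₀ : Fin n) (hdiff : ∀ i, i ≠ i₀ → X i = X' i ∧ t i = t' i) :
    ∀ w : Fin d → ℝ,
      (⨆ j, |fderiv ℝ (fun w => logRegLoss lam X t w - logRegLoss lam X' t' w) w
        (Pi.single j 1)|) ≤ 2 / n := by
  intro w
  have hsample : ∀ (x : Fin d → ℝ) (s : ℝ), (∀ j, x j ∈ Set.Icc (0 : ℝ) 1) → (s = 1 ∨ s = -1) →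
      ∀ j, |fderiv ℝ (logisticLoss x s) w (Pi.single j 1)| ≤ 1 := by
    intro x s hx hs j
    refine (abs_fderiv_logisticLoss_apply_single_le x s w j).trans
      (mul_le_one₀ ?_ (abs_nonneg s) ?_)
    · exact abs_le.mpr ⟨by linarith [(hx j).1], (hx j).2⟩
    · rcases hs with rfl | rfl <;> norm_num
  have hd := differentiableAt_logisticLoss (X i₀) (t i₀) w
  have hd' := differentiableAt_logisticLoss (X' i₀) (t' i₀) w
  rw [logRegLoss_sub_logRegLoss lam i₀ hdiff, fderiv_const_mul (hd.sub hd'), fderiv_sub hd hd']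
  refine Real.iSup_le (fun j => ?_) (by positivity)
  simp only [one_div, smul_apply, sub_apply, smul_eq_mul, abs_mul, abs_inv, Nat.abs_cast]
  calc (n : ℝ)⁻¹ * |_ - _| ≤ (n : ℝ)⁻¹ * (1 + 1) := by
        gcongr
        exact (abs_sub _ _).trans
          (add_le_add (hsample _ _ (hX i₀) (ht i₀) j) (hsample _ _ (hX' i₀) (ht' i₀) j))
    _ = 2 / n := by ring

/-- If datasets `(X, t)` and `(X', t')` (covariates in `[0,1]^d`, labels in
`{-1, 1}`) differ in a single sample, then the gradient of
`g(w) = J(w, D) - J(w, D')` satisfies `‖∇g(w)‖_∞ ≤ 2/n`; each partial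
derivative is bounded by `2/n` in absolute value. -/
theorem stmt6 {n d : ℕ} (hn : 0 < n) (lam : ℝ) (hlam : 0 < lam)
    (X X' : Fin n → Fin d → ℝ) (t t' : Fin n → ℝ)
    (hX : ∀ i j, X i j ∈ Set.Icc (0 : ℝ) 1) (hX' : ∀ i j, X' i j ∈ Set.Icc (0 : ℝ) 1)
    (ht : ∀ i, t i = 1 ∨ t i = -1) (ht' : ∀ i, t' i = 1 ∨ t' i = -1)
    (i₀ : Fin n) (hdiff : ∀ i, i ≠ i₀ → X i = X' i ∧ t i = t' i) :
    ∀ w : Fin d → ℝ,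
      (⨆ j, |fderiv ℝ (fun w => logRegLoss lam X t w - logRegLoss lam X' t' w) w
        (Pi.single j 1)|) ≤ 2 / n :=
  stmt6_general lam X X' t t' hX hX' ht ht' i₀ hdiff
end

section
/- The Laplace mechanism satisfies ε-differential privacy: if f : 𝒟 → ℝ has global sensitivity Δ = sup over neighboring datasets D ≃ D' of |f(D) - f(D')|, then the mechanism A(D) = f(D) + L where L is Laplace-distributed with scale Δ/ε satisfies, for every measurable set O ⊆ ℝ and all neighboring D, D': Pr[A(D) ∈ O] ≤ e^ε · Pr[A(D') ∈ O]. -/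
open MeasureTheory

/-- The Laplace mechanism satisfies ε-DP: if `f` has global sensitivity `Δ`
w.r.t. the neighboring relation `Nbr`, then adding Laplace noise of scale
`Δ/ε` (density `x ↦ (ε/(2Δ)) e^{-|x - f(D)|/(Δ/ε)}`) yields, for every
measurable output set `O` and all neighboring `D, D'`:
`Pr[A(D) ∈ O] ≤ e^ε · Pr[A(D') ∈ O]`. -/
theorem stmt8 {𝒟 : Type*} (Nbr : 𝒟 → 𝒟 → Prop) (f : 𝒟 → ℝ) (Δ ε : ℝ)
    (hΔ : 0 < Δ) (hε : 0 < ε)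
    (hsens : ∀ D D', Nbr D D' → |f D - f D'| ≤ Δ)
    (D D' : 𝒟) (hN : Nbr D D') (O : Set ℝ) (hO : MeasurableSet O) :
    (∫⁻ x in O, ENNReal.ofReal ((ε / (2 * Δ)) * Real.exp (-(|x - f D| / (Δ / ε))))) ≤
      ENNReal.ofReal (Real.exp ε) *
        ∫⁻ x in O, ENNReal.ofReal ((ε / (2 * Δ)) * Real.exp (-(|x - f D'| / (Δ / ε)))) := by
  rw [← lintegral_const_mul' _ _ ENNReal.ofReal_ne_top]
  apply lintegral_mono
  intro x
  dsimp only
  rw [← ENNReal.ofReal_mul (Real.exp_pos ε).le]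
  apply ENNReal.ofReal_le_ofReal
  have hc : 0 < ε / (2 * Δ) := by positivity
  rw [show Real.exp ε * (ε / (2 * Δ) * Real.exp (-(|x - f D'| / (Δ / ε)))) =
      ε / (2 * Δ) * (Real.exp ε * Real.exp (-(|x - f D'| / (Δ / ε)))) by ring,
    ← Real.exp_add]
  apply mul_le_mul_of_nonneg_left _ hc.le
  apply Real.exp_le_exp.mpr
  have htri : |x - f D'| ≤ |x - f D| + Δ := by
    calc |x - f D'| = |(x - f D) + (f D - f D')| := by ring_nf
    _ ≤ |x - f D| + |f D - f D'| := abs_add_le _ _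
    _ ≤ |x - f D| + Δ := by linarith [hsens D D' hN]
  have hβ : 0 < Δ / ε := by positivity
  have h1 : (|x - f D'| - |x - f D|) / (Δ / ε) ≤ Δ / (Δ / ε) := by
    gcongr
    linarith
  have h2 : Δ / (Δ / ε) = ε := by field_simp
  rw [sub_div] at h1
  linarith
end

section
/- Sequential composition of pure differential privacy: if mechanisms A₁ and A₂ (where A₂ may depend on the output of A₁) satisfy ε₁-DP and ε₂-DP respectively, then the composed mechanism D ↦ (A₁(D), A₂(D, A₁(D))) satisfies (ε₁ + ε₂)-DP. -/
/-- A mechanism `A : 𝒟 → PMF Ω` satisfies ε-DP w.r.t. the neighboring relation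
`Nbr` if for all neighboring datasets and all output sets `O`,
`Pr[A(D) ∈ O] ≤ e^ε · Pr[A(D') ∈ O]`. -/
def IsDP {𝒟 Ω : Type*} (Nbr : 𝒟 → 𝒟 → Prop) (ε : ℝ) (A : 𝒟 → PMF Ω) : Prop :=
  ∀ D D', Nbr D D' → ∀ O : Set Ω,
    (A D).toOuterMeasure O ≤ ENNReal.ofReal (Real.exp ε) * (A D').toOuterMeasure O

/-- Sequential composition of pure DP: if `A₁` is ε₁-DP and, for every possible
output `ω₁` of `A₁`, the mechanism `D ↦ A₂ D ω₁` is ε₂-DP, then the composed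
mechanism `D ↦ (A₁(D), A₂(D, A₁(D)))` is (ε₁+ε₂)-DP. -/
theorem stmt10 {𝒟 Ω₁ Ω₂ : Type*} (Nbr : 𝒟 → 𝒟 → Prop) (ε₁ ε₂ : ℝ)
    (hε₁ : 0 ≤ ε₁) (hε₂ : 0 ≤ ε₂)
    (A₁ : 𝒟 → PMF Ω₁) (A₂ : 𝒟 → Ω₁ → PMF Ω₂)
    (h₁ : IsDP Nbr ε₁ A₁) (h₂ : ∀ ω₁, IsDP Nbr ε₂ (fun D => A₂ D ω₁)) :
    IsDP Nbr (ε₁ + ε₂)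
      (fun D => (A₁ D).bind fun ω₁ => (A₂ D ω₁).map (Prod.mk ω₁)) := by
  intro D D' hN O
  have hpt : ∀ ω₁, A₁ D ω₁ ≤ ENNReal.ofReal (Real.exp ε₁) * A₁ D' ω₁ := by
    intro ω₁
    have := h₁ D D' hN {ω₁}
    simpa [PMF.toOuterMeasure_apply_singleton] using this
  simp only [PMF.toOuterMeasure_bind_apply, PMF.toOuterMeasure_map_apply]
  calc ∑' ω₁, A₁ D ω₁ * (A₂ D ω₁).toOuterMeasure (Prod.mk ω₁ ⁻¹' O)
      ≤ ∑' ω₁, (ENNReal.ofReal (Real.exp ε₁) * A₁ D' ω₁) *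
          (ENNReal.ofReal (Real.exp ε₂) * (A₂ D' ω₁).toOuterMeasure (Prod.mk ω₁ ⁻¹' O)) := by
        refine ENNReal.tsum_le_tsum fun ω₁ => ?_
        exact mul_le_mul' (hpt ω₁) (h₂ ω₁ D D' hN _)
    _ = ENNReal.ofReal (Real.exp (ε₁ + ε₂)) *
          ∑' ω₁, A₁ D' ω₁ * (A₂ D' ω₁).toOuterMeasure (Prod.mk ω₁ ⁻¹' O) := by
        rw [Real.exp_add, ENNReal.ofReal_mul (Real.exp_pos ε₁).le, ← ENNReal.tsum_mul_left]
        congr 1; funext ω₁; ring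
end

section
/- Under bounded differential privacy where datasets are neighbors if they differ in one sample's outcome value (which lies in an interval of length B), consider the aggregated estimator whose value depends on each sample's own observed outcome once and on its use as a matched neighbor in counterfactual estimates, each counterfactual being an average over N neighbors so that each use contributes weight 1/N, with each sample used as a matched neighbor at most k·N times. Then changing one sample's outcome by at most B changes the aggregated sum of potential outcomes by at most (k+1)·B; i.e., the global sensitivity of the aggregate is (k+1)B. -/
open Finset

/-- Global sensitivity of the aggregated sum of potential outcomes under
bounded DP where neighbors differ in one sample's outcome (by at most `B`):
the aggregate `S = Σᵢ Yᵢ + Σᵢ (1/N) Σ_{l ∈ P(i)} Y_l`, where each match set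
`P(i)` has size `N` and each sample is used as a matched neighbor at most
`k·N` times, changes by at most `(k+1)·B`. -/
theorem stmt17 {n : ℕ} (N k : ℕ) (hN : 0 < N) (B : ℝ) (hB : 0 ≤ B)
    (P : Fin n → Finset (Fin n)) (hcard : ∀ i, (P i).card = N)
    (huse : ∀ l, (Finset.univ.filter (fun i => l ∈ P i)).card ≤ k * N)
    (Y Y' : Fin n → ℝ) (i₀ : Fin n)
    (hsame : ∀ i, i ≠ i₀ → Y i = Y' i) (hbound : |Y i₀ - Y' i₀| ≤ B) :
    |((∑ i, Y i) + ∑ i, (1 / N : ℝ) * ∑ l ∈ P i, Y l) -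
      ((∑ i, Y' i) + ∑ i, (1 / N : ℝ) * ∑ l ∈ P i, Y' l)| ≤ (k + 1) * B := by
  set D : Fin n → ℝ := fun i => Y i - Y' i with hD
  have hDz : ∀ i, i ≠ i₀ → D i = 0 := fun i hi => by simp [hD, hsame i hi]
  have h1 : (∑ i, Y i) - (∑ i, Y' i) = D i₀ := by
    rw [← Finset.sum_sub_distrib, Finset.sum_eq_single i₀]
    · intro b _ hb; exact hDz b hb
    · simp
  have h2 : ∀ i, (∑ l ∈ P i, Y l) - (∑ l ∈ P i, Y' l)
      = if i₀ ∈ P i then D i₀ else 0 := by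
    intro i
    rw [← Finset.sum_sub_distrib]
    by_cases h : i₀ ∈ P i
    · rw [if_pos h, Finset.sum_eq_single i₀]
      · intro b _ hb; exact hDz b hb
      · intro h'; exact absurd h h'
    · rw [if_neg h]
      exact Finset.sum_eq_zero fun b hb => hDz b (fun e => h (e ▸ hb))
  set c : ℕ := (Finset.univ.filter (fun i => i₀ ∈ P i)).card with hc
  have h3 : (∑ i, (1 / N : ℝ) * ∑ l ∈ P i, Y l)
      - (∑ i, (1 / N : ℝ) * ∑ l ∈ P i, Y' l) = ((c : ℝ) / N) * D i₀ := by
    rw [← Finset.sum_sub_distrib]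
    have e1 : ∀ i ∈ Finset.univ, (1 / N : ℝ) * (∑ l ∈ P i, Y l) - (1 / N : ℝ) * (∑ l ∈ P i, Y' l)
        = (1 / N : ℝ) * (if i₀ ∈ P i then D i₀ else 0) := by
      intro i _; rw [← mul_sub, h2 i]
    rw [Finset.sum_congr rfl e1, ← Finset.mul_sum, ← Finset.sum_filter,
      Finset.sum_const, nsmul_eq_mul, ← hc]
    ring
  have key : ((∑ i, Y i) + ∑ i, (1 / N : ℝ) * ∑ l ∈ P i, Y l) -
      ((∑ i, Y' i) + ∑ i, (1 / N : ℝ) * ∑ l ∈ P i, Y' l)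
      = (1 + (c : ℝ) / N) * D i₀ := by
    have : ((∑ i, Y i) + ∑ i, (1 / N : ℝ) * ∑ l ∈ P i, Y l) -
      ((∑ i, Y' i) + ∑ i, (1 / N : ℝ) * ∑ l ∈ P i, Y' l)
      = ((∑ i, Y i) - (∑ i, Y' i)) + ((∑ i, (1 / N : ℝ) * ∑ l ∈ P i, Y l)
        - (∑ i, (1 / N : ℝ) * ∑ l ∈ P i, Y' l)) := by ring
    rw [this, h1, h3]; ring
  rw [key, abs_mul]
  have hNpos : (0 : ℝ) < N := by exact_mod_cast hN
  have hcle : (c : ℝ) / N ≤ k := by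
    rw [div_le_iff₀ hNpos]
    exact_mod_cast huse i₀
  have habs : |1 + (c : ℝ) / N| = 1 + (c : ℝ) / N := by
    rw [abs_of_nonneg]; positivity
  rw [habs]
  calc (1 + (c : ℝ) / N) * |D i₀| ≤ (1 + k) * B := by
        apply mul_le_mul (by linarith) hbound (abs_nonneg _) (by positivity)
    _ = (k + 1) * B := by ring
end
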